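/- Subject to the diagonal-shear boundary condition BC1, for every L with 0<L<1 there exists a constant c_L>0, depending only on L, such that for all σ>0 and γ>0 one has J_L ≤ min{ 3γ²/(2L), γ²(1−L)/L + c_L σ γ }. -/

import Mathlib

/-!
Both bounds come from competitors `u = (W, W)`, `β = b S` with `S = [[1,-1],[1,-1]]`, built from
two profiles `P, Q : ℝ → ℝ` of `t = x₀ - x₁`: `W = P(t) + x₁ Q(t)` and
`b = P'(t) - Q(t)/2 + x₁ Q'(t)`. Every entry of `∇u - β` equals `Q(t)/2`, so the elastic energy
density is `Q(t)²`, and the curl of each row of `β` is the derivative of `b` along `(1,1)`, which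
is `Q'(t)`. The boundary conditions reduce to `P = 0` on `[0,1]` and `P + L Q = γ` on `[-L, 1-L]`.

The constant profile `Q = γ/L` costs `γ²/L ≤ 3γ²/(2L)`. For the second bound `Q` is `γ/L` times
a smooth plateau, equal to `1` on `[0, 1-L]` and vanishing outside `[-ε, 1-L+ε]`: its elastic
energy is at most `γ²(1-L+2ε)/L`, and since each of its two smooth steps is monotone with total
variation `1`, `∫|Q'| ≤ 2γ/L` and the curl costs at most `4σγ`. Choosing `ε = Lσ/γ` gives
`c = 6`.
-/

open MeasureTheory Set Filter Topology
open scoped ENNReal NNReal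

noncomputable section

abbrev Pt2 := Fin 2 → ℝ
abbrev Mat2 := Matrix (Fin 2) (Fin 2) ℝ

/-- The rectangle Ω_L = (0,1) × (0,L). -/
def Omega (L : ℝ) : Set Pt2 := {x | x 0 ∈ Ioo (0:ℝ) 1 ∧ x 1 ∈ Ioo (0:ℝ) L}

/-- Partial derivative ∂_j of a scalar function. -/
def pd (j : Fin 2) (f : Pt2 → ℝ) (x : Pt2) : ℝ := fderiv ℝ f x (Pi.single j 1)

/-- C¹ test function compactly supported in Ω_L. -/
def IsTest (L : ℝ) (f : Pt2 → ℝ) : Prop :=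
  ContDiff ℝ 1 f ∧ HasCompactSupport f ∧ tsupport f ⊆ Omega L

/-- Du is the weak (distributional) gradient of u on Ω_L. -/
def IsWeakGradient (L : ℝ) (u : Pt2 → Pt2) (Du : Pt2 → Mat2) : Prop :=
  ∀ f : Pt2 → ℝ, IsTest L f → ∀ i j,
    ∫ x in Omega L, u x i * pd j f x = - ∫ x in Omega L, Du x i j * f x

/-- Symmetric part of a matrix. -/
def symPart (M : Mat2) : Mat2 := (2:ℝ)⁻¹ • (M + M.transpose)

/-- Squared Frobenius norm. -/
def normSq (M : Mat2) : ℝ := ∑ i, ∑ j, (M i j)^2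

/-- The two slip matrices (up to scalar multiples). -/
def SlipSet : Set Mat2 :=
  {M | ∃ s : ℝ, M = s • !![(1:ℝ), -1; 1, -1] ∨ M = s • !![(1:ℝ), 1; -1, -1]}

/-- The single-slip side condition. -/
def SingleSlip (L : ℝ) (β : Pt2 → Mat2) : Prop :=
  ∀ᵐ x ∂(volume.restrict (Omega L)), β x ∈ SlipSet

/-- Total variation of the row-wise distributional curl of β on Ω_L. -/
def TVcurl (L : ℝ) (β : Pt2 → Mat2) : ℝ≥0∞ :=
  sSup {t | ∃ φ : Fin 2 → Pt2 → ℝ,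
    (∀ i, IsTest L (φ i)) ∧ (∀ i x, φ i x ∈ Icc (-1:ℝ) 1) ∧
    t = ENNReal.ofReal (∑ i, ∫ x in Omega L,
          (β x i 1 * pd 0 (φ i) x - β x i 0 * pd 1 (φ i) x))}

/-- The energy E_L(u,β) (expressed through the weak gradient Du of u). -/
def Energy (L σ : ℝ) (Du β : Pt2 → Mat2) : ℝ≥0∞ :=
  (∫⁻ x in Omega L, ENNReal.ofReal (normSq (symPart (Du x - β x)))) +
    ENNReal.ofReal σ * TVcurl L β

/-- Admissible pair (u,β), with Du the weak gradient of u. -/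
def IsAdmissible (L : ℝ) (u : Pt2 → Pt2) (Du β : Pt2 → Mat2) : Prop :=
  ContinuousOn u (closure (Omega L)) ∧
  IsWeakGradient L u Du ∧
  (∀ i j, MemLp (fun x => Du x i j) 2 (volume.restrict (Omega L))) ∧
  (∀ i j, LocallyIntegrableOn (fun x => β x i j) (Omega L)) ∧
  SingleSlip L β

/-- Dirichlet boundary conditions: u = 0 at x₂ = 0 and u = γ v at x₂ = L. -/
def BCv (L γ : ℝ) (v : Fin 2 → ℝ) (u : Pt2 → Pt2) : Prop :=
  (∀ x ∈ closure (Omega L), x 1 = 0 → u x = 0) ∧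
  (∀ x ∈ closure (Omega L), x 1 = L → u x = γ • v)

/-- The infimum energy J_L. -/
def J (L σ γ : ℝ) (v : Fin 2 → ℝ) : ℝ≥0∞ :=
  sInf {e | ∃ u Du β, IsAdmissible L u Du β ∧ BCv L γ v u ∧ TVcurl L β ≠ ⊤ ∧
    e = Energy L σ Du β}

lemma omega_eq_pi (L : ℝ) : Omega L = univ.pi ![Ioo 0 1, Ioo 0 L] := by
  ext x
  simp [Omega, Fin.forall_fin_two]

lemma isOpen_omega (L : ℝ) : IsOpen (Omega L) := by
  rw [omega_eq_pi]
  exact isOpen_set_pi finite_univ fun i _ => by fin_cases i <;> exact isOpen_Ioo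

lemma measurableSet_omega (L : ℝ) : MeasurableSet (Omega L) := (isOpen_omega L).measurableSet

lemma volume_omega (L : ℝ) : volume (Omega L) = ENNReal.ofReal L := by
  simp [omega_eq_pi, volume_pi_pi, Fin.prod_univ_two, Real.volume_Ioo]

lemma closure_omega_subset (L : ℝ) : closure (Omega L) ⊆ univ.pi ![Icc 0 1, Icc 0 L] := by
  rw [omega_eq_pi]
  refine closure_minimal (pi_mono fun i _ => ?_) (isClosed_set_pi fun i _ => ?_) <;> fin_cases i
  exacts [Ioo_subset_Icc_self, Ioo_subset_Icc_self, isClosed_Icc, isClosed_Icc]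

lemma isCompact_closure_omega (L : ℝ) : IsCompact (closure (Omega L)) :=
  (isCompact_univ_pi fun i => by fin_cases i <;> exact isCompact_Icc).of_isClosed_subset
    isClosed_closure (closure_omega_subset L)

lemma memLp_two_omega (L : ℝ) {h : Pt2 → ℝ} (hh : Continuous h) :
    MemLp h 2 (volume.restrict (Omega L)) := by
  have : IsFiniteMeasure (volume.restrict (Omega L)) :=
    ⟨by simp [volume_omega]⟩
  obtain ⟨C, hC⟩ := (isCompact_closure_omega L).exists_bound_of_continuousOn hh.continuousOn
  exact .of_bound hh.aestronglyMeasurable C <|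
    (ae_restrict_iff' (measurableSet_omega L)).2 <| .of_forall fun x hx => hC x (subset_closure hx)

lemma lintegral_enorm_omega_lt_top (L : ℝ) {h : Pt2 → ℝ} (hh : Continuous h) :
    ∫⁻ x in Omega L, ‖h x‖ₑ < ⊤ :=
  ((hh.continuousOn.integrableOn_compact (isCompact_closure_omega L)).mono_set
    subset_closure).hasFiniteIntegral

lemma lintegral_omega_comp_sub_le (L : ℝ) (g : ℝ → ℝ≥0∞) :
    ∫⁻ x in Omega L, g (x 0 - x 1) ≤ ENNReal.ofReal L * ∫⁻ s, g s := by
  let e : Pt2 ≃ᵐ ℝ × ℝ := MeasurableEquiv.finTwoArrow.trans MeasurableEquiv.prodComm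
  have he : MeasurePreserving e volume volume :=
    (Measure.measurePreserving_swap).comp (volume_preserving_finTwoArrow ℝ)
  have hΩ : Omega L = e ⁻¹' (Ioo 0 L ×ˢ Ioo 0 1) := by
    ext x
    exact and_comm
  calc ∫⁻ x in Omega L, g (x 0 - x 1)
      = ∫⁻ p in Ioo 0 L ×ˢ Ioo 0 1, g (p.2 - p.1) := by
        rw [hΩ]
        exact he.setLIntegral_comp_preimage_emb e.measurableEmbedding (fun p => g (p.2 - p.1)) _
    _ ≤ ∫⁻ y in Ioo 0 L, ∫⁻ x in Ioo 0 1, g (x - y) := by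
        rw [Measure.volume_eq_prod, ← Measure.prod_restrict]
        exact lintegral_prod_le _
    _ ≤ ∫⁻ _ in Ioo 0 L, ∫⁻ s, g s := by
        refine lintegral_mono fun y => ?_
        exact (setLIntegral_le_lintegral _ _).trans_eq (lintegral_sub_right_eq_self g y)
    _ = ENNReal.ofReal L * ∫⁻ s, g s := by
        rw [setLIntegral_const, Real.volume_Ioo, sub_zero, mul_comm]

lemma IsTest.eq_zero_of_notMem {L : ℝ} {f : Pt2 → ℝ} (hf : IsTest L f) {x : Pt2}
    (hx : x ∉ Omega L) : f x = 0 :=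
  image_eq_zero_of_notMem_tsupport fun h => hx (hf.2.2 h)

lemma IsTest.pd_eq_zero_of_notMem {L : ℝ} {f : Pt2 → ℝ} (hf : IsTest L f) {x : Pt2}
    (hx : x ∉ Omega L) (j : Fin 2) : pd j f x = 0 := by
  have : fderiv ℝ f x = 0 :=
    image_eq_zero_of_notMem_tsupport fun h => hx (hf.2.2 (tsupport_fderiv_subset ℝ h))
  simp [pd, this]

lemma continuous_pd {f : Pt2 → ℝ} (hf : ContDiff ℝ 1 f) (j : Fin 2) : Continuous (pd j f) :=
  (hf.continuous_fderiv one_ne_zero).clm_apply continuous_const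

lemma IsTest.hasCompactSupport_pd {L : ℝ} {f : Pt2 → ℝ} (hf : IsTest L f) (j : Fin 2) :
    HasCompactSupport (pd j f) :=
  hf.2.1.fderiv_apply ℝ _

lemma IsTest.integrable_mul {L : ℝ} {f h : Pt2 → ℝ} (hf : IsTest L f) (hh : Continuous h) :
    Integrable fun x => h x * f x :=
  (hh.mul hf.1.continuous).integrable_of_hasCompactSupport hf.2.1.mul_left

lemma IsTest.integrable_mul_pd {L : ℝ} {f h : Pt2 → ℝ} (hf : IsTest L f) (hh : Continuous h)
    (j : Fin 2) : Integrable fun x => h x * pd j f x :=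
  (hh.mul (continuous_pd hf.1 j)).integrable_of_hasCompactSupport
    (hf.hasCompactSupport_pd j).mul_left

lemma setIntegral_mul_pd_eq_neg {L : ℝ} {g f : Pt2 → ℝ} (hg : ContDiff ℝ 1 g) (hf : IsTest L f)
    (j : Fin 2) : ∫ x in Omega L, g x * pd j f x = -∫ x in Omega L, pd j g x * f x := by
  rw [setIntegral_eq_integral_of_forall_compl_eq_zero fun x hx => by
      rw [hf.pd_eq_zero_of_notMem hx, mul_zero],
    setIntegral_eq_integral_of_forall_compl_eq_zero fun x hx => by
      rw [hf.eq_zero_of_notMem hx, mul_zero]]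
  exact integral_mul_fderiv_eq_neg_fderiv_mul_of_integrable (hf.integrable_mul (continuous_pd hg j))
    (hf.integrable_mul_pd hg.continuous j)
    (hf.integrable_mul hg.continuous) (fun x _ => hg.differentiable one_ne_zero x)
    (fun x _ => hf.1.differentiable one_ne_zero x)

def gradMat (u : Pt2 → Pt2) (x : Pt2) : Mat2 := Matrix.of fun i j => pd j (fun y => u y i) x

lemma isWeakGradient_gradMat (L : ℝ) {u : Pt2 → Pt2} (hu : ContDiff ℝ 1 u) :
    IsWeakGradient L u (gradMat u) :=
  fun _ hf i j => setIntegral_mul_pd_eq_neg (contDiff_pi.1 hu i) hf j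

lemma isAdmissible_of_contDiff (L : ℝ) {u : Pt2 → Pt2} {β : Pt2 → Mat2} (hu : ContDiff ℝ 1 u)
    (hβ : Continuous β) (hslip : ∀ x, β x ∈ SlipSet) : IsAdmissible L u (gradMat u) β :=
  ⟨hu.continuous.continuousOn, isWeakGradient_gradMat L hu,
    fun i j => memLp_two_omega L (continuous_pd (contDiff_pi.1 hu i) j),
    fun i j => (hβ.matrix_elem i j).locallyIntegrable.locallyIntegrableOn _,
    .of_forall hslip⟩

lemma TVcurl_le_lintegral_curl (L : ℝ) {β : Pt2 → Mat2}
    (hβ : ∀ i j, ContDiff ℝ 1 fun x => β x i j) :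
    TVcurl L β ≤
      ∑ i, ∫⁻ x in Omega L, ‖pd 1 (fun y => β y i 0) x - pd 0 (fun y => β y i 1) x‖ₑ := by
  refine sSup_le ?_
  rintro _ ⟨φ, hφ, hφ1, rfl⟩
  set curl : Fin 2 → Pt2 → ℝ := fun i x => pd 1 (fun y => β y i 0) x - pd 0 (fun y => β y i 1) x
  have hparts : ∀ i, ∫ x in Omega L, (β x i 1 * pd 0 (φ i) x - β x i 0 * pd 1 (φ i) x) =
      ∫ x in Omega L, curl i x * φ i x := by
    intro i
    have hint : ∀ j k, Integrable (fun x => pd j (fun y => β y i k) x * φ i x) :=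
      fun j k => (hφ i).integrable_mul (continuous_pd (hβ i k) j)
    have hint' : ∀ j k, Integrable (fun x => β x i k * pd j (φ i) x) :=
      fun j k => (hφ i).integrable_mul_pd (hβ i k).continuous j
    simp only [curl, sub_mul]
    rw [integral_sub (hint' 0 1).integrableOn (hint' 1 0).integrableOn,
      integral_sub (hint 1 0).integrableOn (hint 0 1).integrableOn,
      setIntegral_mul_pd_eq_neg (hβ i 1) (hφ i), setIntegral_mul_pd_eq_neg (hβ i 0) (hφ i)]
    ring
  have hφle : ∀ i x, ‖curl i x * φ i x‖ₑ ≤ ‖curl i x‖ₑ := fun i x => by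
    rw [enorm_mul]
    exact mul_le_of_le_one_right' (by simpa [← ofReal_norm, abs_le] using hφ1 i x)
  calc ENNReal.ofReal (∑ i, ∫ x in Omega L, (β x i 1 * pd 0 (φ i) x - β x i 0 * pd 1 (φ i) x))
      ≤ ∑ i, ‖∫ x in Omega L, curl i x * φ i x‖ₑ := by
        simp only [hparts]
        exact (Real.ofReal_le_enorm _).trans (enorm_sum_le _ _)
    _ ≤ ∑ i, ∫⁻ x in Omega L, ‖curl i x‖ₑ := by
        gcongr with i
        exact (enorm_integral_le_lintegral_enorm _).trans (lintegral_mono (hφle i))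

def shearProfile (F G : ℝ → ℝ) (x : Pt2) : ℝ := F (x 0 - x 1) + x 1 * G (x 0 - x 1)

section shearProfile

variable {F G : ℝ → ℝ}

lemma contDiff_shearProfile {n : WithTop ℕ∞} (hF : ContDiff ℝ n F) (hG : ContDiff ℝ n G) :
    ContDiff ℝ n (shearProfile F G) := by
  have ht : ContDiff ℝ n fun x : Pt2 => x 0 - x 1 := by fun_prop
  exact (hF.comp ht).add ((contDiff_apply ℝ ℝ 1).mul (hG.comp ht))

lemma hasFDerivAt_shearProfile (hF : Differentiable ℝ F) (hG : Differentiable ℝ G) (x : Pt2) :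
    HasFDerivAt (shearProfile F G)
      (deriv F (x 0 - x 1) • (.proj 0 - .proj 1) +
        (x 1 • deriv G (x 0 - x 1) • (.proj 0 - .proj 1) +
          G (x 0 - x 1) • .proj 1 : Pt2 →L[ℝ] ℝ)) x := by
  have ht : HasFDerivAt (fun x : Pt2 => x 0 - x 1) (.proj 0 - .proj 1 : Pt2 →L[ℝ] ℝ) x :=
    (hasFDerivAt_apply 0 x).sub (hasFDerivAt_apply 1 x)
  exact ((hF _).hasDerivAt.comp_hasFDerivAt x ht).add
    ((hasFDerivAt_apply 1 x).mul ((hG _).hasDerivAt.comp_hasFDerivAt x ht))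

lemma pd_zero_shearProfile (hF : Differentiable ℝ F) (hG : Differentiable ℝ G) (x : Pt2) :
    pd 0 (shearProfile F G) x = deriv F (x 0 - x 1) + x 1 * deriv G (x 0 - x 1) := by
  simp [pd, (hasFDerivAt_shearProfile hF hG x).fderiv]

lemma pd_one_shearProfile (hF : Differentiable ℝ F) (hG : Differentiable ℝ G) (x : Pt2) :
    pd 1 (shearProfile F G) x =
      G (x 0 - x 1) - deriv F (x 0 - x 1) - x 1 * deriv G (x 0 - x 1) := by
  simp [pd, (hasFDerivAt_shearProfile hF hG x).fderiv]
  ring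

lemma pd_zero_add_pd_one_shearProfile (hF : Differentiable ℝ F) (hG : Differentiable ℝ G)
    (x : Pt2) :
    pd 0 (shearProfile F G) x + pd 1 (shearProfile F G) x = G (x 0 - x 1) := by
  rw [pd_zero_shearProfile hF hG, pd_one_shearProfile hF hG]
  ring

end shearProfile

def slipMatrix : Mat2 := !![1, -1; 1, -1]

lemma slipMatrix_apply_zero (i : Fin 2) : slipMatrix i 0 = 1 := by fin_cases i <;> rfl

lemma slipMatrix_apply_one (i : Fin 2) : slipMatrix i 1 = -1 := by fin_cases i <;> rfl

lemma TVcurl_smul_slipMatrix_le (L : ℝ) {b : Pt2 → ℝ} (hb : ContDiff ℝ 1 b) :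
    TVcurl L (fun x => b x • slipMatrix) ≤ 2 * ∫⁻ x in Omega L, ‖pd 0 b x + pd 1 b x‖ₑ := by
  have hcol0 : ∀ i, (fun y => (b y • slipMatrix) i 0) = b := fun i => by
    simp [slipMatrix_apply_zero]
  have hcol1 : ∀ i, (fun y => (b y • slipMatrix) i 1) = fun y => -b y := fun i => by
    simp [slipMatrix_apply_one]
  refine (TVcurl_le_lintegral_curl (β := fun x => b x • slipMatrix) L
    fun i j => hb.mul contDiff_const).trans_eq ?_
  simp only [hcol0, hcol1, pd, fderiv_fun_neg, neg_apply, sub_neg_eq_add,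
    add_comm (fderiv ℝ b _ (Pi.single 1 1)), Fin.sum_univ_two, two_mul]

lemma normSq_symPart_of_forall_eq {M : Mat2} {c : ℝ} (hM : ∀ i j, M i j = c) :
    normSq (symPart M) = 4 * c ^ 2 := by
  simp [normSq, symPart, hM]
  ring

def diagonalDisplacement (P Q : ℝ → ℝ) (x : Pt2) : Pt2 := fun _ => shearProfile P Q x

def slipAmplitude (P Q : ℝ → ℝ) : Pt2 → ℝ := shearProfile (fun s => deriv P s - Q s / 2) (deriv Q)

section profile

variable {P Q : ℝ → ℝ}

lemma BCv_diagonalDisplacement {L γ : ℝ} (hP0 : ∀ s ∈ Icc (0 : ℝ) 1, P s = 0)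
    (hPQ : ∀ s ∈ Icc (-L) (1 - L), P s + L * Q s = γ) :
    BCv L γ ![1, 1] (diagonalDisplacement P Q) := by
  refine ⟨fun x hx h1 => funext fun _ => ?_, fun x hx h1 => funext fun i => ?_⟩ <;>
    have hx0 : x 0 ∈ Icc 0 1 := closure_omega_subset L hx 0 (mem_univ _)
  · simp [diagonalDisplacement, shearProfile, h1, hP0 _ hx0]
  · have ht : x 0 - L ∈ Icc (-L) (1 - L) := ⟨by linarith [hx0.1], by linarith [hx0.2]⟩
    fin_cases i <;> simp [diagonalDisplacement, shearProfile, h1, hPQ _ ht]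

lemma gradMat_sub_slipAmplitude_smul_apply (hP : Differentiable ℝ P) (hQ : Differentiable ℝ Q)
    (x : Pt2) (i j : Fin 2) :
    (gradMat (diagonalDisplacement P Q) x - slipAmplitude P Q x • slipMatrix) i j =
      Q (x 0 - x 1) / 2 := by
  have hgrad : ∀ j, gradMat (diagonalDisplacement P Q) x i j = pd j (shearProfile P Q) x :=
    fun _ => rfl
  have hb : slipAmplitude P Q x =
      deriv P (x 0 - x 1) - Q (x 0 - x 1) / 2 + x 1 * deriv Q (x 0 - x 1) := rfl
  rw [Matrix.sub_apply, Matrix.smul_apply, smul_eq_mul, hgrad, hb]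
  revert j
  refine Fin.forall_fin_two.2 ⟨?_, ?_⟩
  · rw [slipMatrix_apply_zero, pd_zero_shearProfile hP hQ]
    ring
  · rw [slipMatrix_apply_one, pd_one_shearProfile hP hQ]
    ring

lemma contDiff_slipAmplitude (hP : ContDiff ℝ 2 P) (hQ : ContDiff ℝ 2 Q) :
    ContDiff ℝ 1 (slipAmplitude P Q) :=
  contDiff_shearProfile (hP.deriv'.sub ((hQ.of_le (by norm_num)).div_const 2)) hQ.deriv'

lemma TVcurl_slipAmplitude_smul_le (L : ℝ) (hP : ContDiff ℝ 2 P) (hQ : ContDiff ℝ 2 Q) :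
    TVcurl L (fun x => slipAmplitude P Q x • slipMatrix) ≤
      2 * ∫⁻ x in Omega L, ‖deriv Q (x 0 - x 1)‖ₑ := by
  have hcurl : ∀ x, pd 0 (slipAmplitude P Q) x + pd 1 (slipAmplitude P Q) x =
      deriv Q (x 0 - x 1) :=
    pd_zero_add_pd_one_shearProfile
      (hP.deriv'.differentiable_one.sub ((hQ.differentiable (by norm_num)).div_const 2))
      hQ.deriv'.differentiable_one
  simpa only [hcurl] using TVcurl_smul_slipMatrix_le L (contDiff_slipAmplitude hP hQ)

lemma J_le_of_profile {L σ γ : ℝ} (hP : ContDiff ℝ 2 P) (hQ : ContDiff ℝ 2 Q)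
    (hP0 : ∀ s ∈ Icc (0 : ℝ) 1, P s = 0) (hPQ : ∀ s ∈ Icc (-L) (1 - L), P s + L * Q s = γ) :
    J L σ γ ![1, 1] ≤ (∫⁻ x in Omega L, ENNReal.ofReal (Q (x 0 - x 1) ^ 2)) +
      ENNReal.ofReal σ * (2 * ∫⁻ x in Omega L, ‖deriv Q (x 0 - x 1)‖ₑ) := by
  set β : Pt2 → Mat2 := fun x => slipAmplitude P Q x • slipMatrix
  have hadm : IsAdmissible L (diagonalDisplacement P Q) (gradMat (diagonalDisplacement P Q)) β :=
    isAdmissible_of_contDiff L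
      (contDiff_pi.2 fun _ => (contDiff_shearProfile hP hQ).of_le (by norm_num))
      ((contDiff_slipAmplitude hP hQ).continuous.smul continuous_const) fun x => ⟨_, .inl rfl⟩
  have hstrain : ∀ x, normSq (symPart (gradMat (diagonalDisplacement P Q) x - β x)) =
      Q (x 0 - x 1) ^ 2 := fun x => by
    rw [normSq_symPart_of_forall_eq (gradMat_sub_slipAmplitude_smul_apply
      (hP.differentiable (by norm_num)) (hQ.differentiable (by norm_num)) x)]
    ring
  have hcurl := TVcurl_slipAmplitude_smul_le L hP hQ
  have hfin : TVcurl L β ≠ ⊤ :=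
    ne_top_of_le_ne_top (ENNReal.mul_ne_top ENNReal.ofNat_ne_top (lintegral_enorm_omega_lt_top L
      ((hQ.continuous_deriv (by norm_num)).comp (by fun_prop))).ne) hcurl
  calc J L σ γ ![1, 1] ≤ Energy L σ (gradMat (diagonalDisplacement P Q)) β :=
        sInf_le ⟨_, _, β, hadm, BCv_diagonalDisplacement hP0 hPQ, hfin, rfl⟩
    _ ≤ _ := by
        simp only [Energy, hstrain]
        gcongr

end profile

lemma J_le_of_linear {L σ γ : ℝ} (hL0 : 0 < L) :
    J L σ γ ![1, 1] ≤ ENNReal.ofReal (γ ^ 2 / L) := by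
  refine (J_le_of_profile (P := fun _ => 0) (Q := fun _ => γ / L) contDiff_const contDiff_const
    (fun _ _ => rfl) fun _ _ => by rw [zero_add]; field_simp).trans_eq ?_
  rw [setLIntegral_const, volume_omega, ← ENNReal.ofReal_mul (sq_nonneg _)]
  simp only [deriv_const, enorm_zero, lintegral_zero, mul_zero, add_zero]
  congr 1
  field_simp

lemma lintegral_enorm_deriv_le_of_monotone {f : ℝ → ℝ} {m M : ℝ} (hf : Monotone f)
    (hd : Differentiable ℝ f) (hfm : ∀ x, f x ∈ Icc m M) :
    ∫⁻ x, ‖deriv f x‖ₑ ≤ ENNReal.ofReal (M - m) := by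
  have himage := lintegral_deriv_eq_volume_image_of_monotoneOn MeasurableSet.univ
    (fun x _ => (hd x).hasDerivAt.hasDerivWithinAt) (hf.monotoneOn univ)
  rw [Measure.restrict_univ] at himage
  calc ∫⁻ x, ‖deriv f x‖ₑ = ∫⁻ x, ENNReal.ofReal (deriv f x) :=
        lintegral_congr fun x => Real.enorm_eq_ofReal hf.deriv_nonneg
    _ = volume (f '' univ) := himage
    _ ≤ volume (Icc m M) := measure_mono (image_subset_iff.2 fun x _ => hfm x)
    _ = ENNReal.ofReal (M - m) := Real.volume_Icc

lemma enorm_le_one_of_mem_Icc {t : ℝ} (ht : t ∈ Icc (0 : ℝ) 1) : ‖t‖ₑ ≤ 1 := by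
  rw [Real.enorm_eq_ofReal ht.1]
  exact ENNReal.ofReal_le_one.2 ht.2

def ramp (a ε s : ℝ) : ℝ := Real.smoothTransition ((s - a) / ε)

section ramp

variable {a ε : ℝ}

lemma contDiff_ramp {n : ℕ∞} : ContDiff ℝ n (ramp a ε) :=
  Real.smoothTransition.contDiff.comp ((contDiff_id.sub contDiff_const).div_const ε)

lemma ramp_mem_Icc (s : ℝ) : ramp a ε s ∈ Icc 0 1 :=
  ⟨Real.smoothTransition.nonneg _, Real.smoothTransition.le_one _⟩

lemma ramp_eq_zero (hε : 0 < ε) {s : ℝ} (hs : s ≤ a) : ramp a ε s = 0 :=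
  Real.smoothTransition.zero_of_nonpos (div_nonpos_of_nonpos_of_nonneg (by linarith) hε.le)

lemma ramp_eq_one (hε : 0 < ε) {s : ℝ} (hs : a + ε ≤ s) : ramp a ε s = 1 :=
  Real.smoothTransition.one_of_one_le (by rw [le_div_iff₀ hε]; linarith)

lemma monotone_ramp (hε : 0 < ε) : Monotone (ramp a ε) := fun _ _ hst =>
  Real.smoothTransition.monotone (div_le_div_of_nonneg_right (by linarith) hε.le)

lemma lintegral_enorm_deriv_ramp_le (hε : 0 < ε) : ∫⁻ s, ‖deriv (ramp a ε) s‖ₑ ≤ 1 := by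
  simpa using lintegral_enorm_deriv_le_of_monotone (monotone_ramp hε)
    (contDiff_ramp (n := 1).differentiable one_ne_zero) ramp_mem_Icc

end ramp

def plateau (L ε s : ℝ) : ℝ := ramp (-ε) ε s * (1 - ramp (1 - L) ε s)

section plateau

variable {L ε : ℝ}

lemma contDiff_plateau {n : ℕ∞} : ContDiff ℝ n (plateau L ε) :=
  contDiff_ramp.mul (contDiff_const.sub contDiff_ramp)

lemma plateau_mem_Icc (s : ℝ) : plateau L ε s ∈ Icc 0 1 := by
  obtain ⟨h1, h1'⟩ := ramp_mem_Icc (a := -ε) (ε := ε) s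
  obtain ⟨h2, h2'⟩ := ramp_mem_Icc (a := 1 - L) (ε := ε) s
  exact ⟨mul_nonneg h1 (by linarith), mul_le_one₀ h1' (by linarith) (by linarith)⟩

lemma plateau_eq_zero (hε : 0 < ε) {s : ℝ} (hs : s ∉ Icc (-ε) (1 - L + ε)) :
    plateau L ε s = 0 := by
  rcases not_and_or.1 hs with hs | hs
  · rw [plateau, ramp_eq_zero hε (by linarith), zero_mul]
  · rw [plateau, ramp_eq_one (a := 1 - L) hε (by linarith), sub_self, mul_zero]

lemma plateau_eq_ramp (hε : 0 < ε) {s : ℝ} (hs : s ≤ 1 - L) :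
    plateau L ε s = ramp (-ε) ε s := by
  rw [plateau, ramp_eq_zero hε hs, sub_zero, mul_one]

lemma lintegral_enorm_deriv_plateau_le (hε : 0 < ε) : ∫⁻ s, ‖deriv (plateau L ε) s‖ₑ ≤ 2 := by
  have hd : ∀ {a}, Differentiable ℝ (ramp a ε) := contDiff_ramp (n := 1).differentiable one_ne_zero
  have hderiv : ∀ s, deriv (plateau L ε) s = deriv (ramp (-ε) ε) s * (1 - ramp (1 - L) ε s) -
      ramp (-ε) ε s * deriv (ramp (1 - L) ε) s := fun s => by
    have := (hd (a := -ε) s).hasDerivAt.mul ((hd (a := 1 - L) s).hasDerivAt.const_sub 1)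
    exact this.deriv.trans (by ring)
  have hle : ∀ s, ‖deriv (plateau L ε) s‖ₑ ≤
      ‖deriv (ramp (-ε) ε) s‖ₑ + ‖deriv (ramp (1 - L) ε) s‖ₑ := fun s => by
    obtain ⟨h2, h2'⟩ := ramp_mem_Icc (a := 1 - L) (ε := ε) s
    rw [hderiv]
    refine enorm_sub_le.trans (add_le_add ?_ ?_) <;> rw [enorm_mul]
    · exact mul_le_of_le_one_right' (enorm_le_one_of_mem_Icc ⟨by linarith, by linarith⟩)
    · exact mul_le_of_le_one_left' (enorm_le_one_of_mem_Icc (ramp_mem_Icc s))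
  calc ∫⁻ s, ‖deriv (plateau L ε) s‖ₑ
      ≤ ∫⁻ s, ‖deriv (ramp (-ε) ε) s‖ₑ + ‖deriv (ramp (1 - L) ε) s‖ₑ := lintegral_mono hle
    _ = (∫⁻ s, ‖deriv (ramp (-ε) ε) s‖ₑ) + ∫⁻ s, ‖deriv (ramp (1 - L) ε) s‖ₑ :=
        lintegral_add_left (measurable_deriv _).enorm _
    _ ≤ 1 + 1 := add_le_add (lintegral_enorm_deriv_ramp_le hε) (lintegral_enorm_deriv_ramp_le hε)
    _ = 2 := one_add_one_eq_two

lemma lintegral_omega_sq_plateau_le (hL : 0 ≤ L) (hε : 0 < ε) (c : ℝ) :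
    ∫⁻ x in Omega L, ENNReal.ofReal ((c * plateau L ε (x 0 - x 1)) ^ 2) ≤
      ENNReal.ofReal (L * c ^ 2 * (1 - L + 2 * ε)) :=
  calc ∫⁻ x in Omega L, ENNReal.ofReal ((c * plateau L ε (x 0 - x 1)) ^ 2)
      ≤ ENNReal.ofReal L * ∫⁻ s, ENNReal.ofReal ((c * plateau L ε s) ^ 2) :=
        lintegral_omega_comp_sub_le L _
    _ ≤ ENNReal.ofReal L *
          ∫⁻ s, (Icc (-ε) (1 - L + ε)).indicator (fun _ => ENNReal.ofReal (c ^ 2)) s := by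
        gcongr with s
        by_cases hs : s ∈ Icc (-ε) (1 - L + ε)
        · obtain ⟨hpl0, hpl1⟩ := plateau_mem_Icc (L := L) (ε := ε) s
          rw [indicator_of_mem hs, mul_pow]
          exact ENNReal.ofReal_le_ofReal
            (mul_le_of_le_one_right (sq_nonneg c) (pow_le_one₀ hpl0 hpl1))
        · simp [indicator_of_notMem hs, plateau_eq_zero hε hs]
    _ = ENNReal.ofReal (L * c ^ 2 * (1 - L + 2 * ε)) := by
        rw [lintegral_indicator_const measurableSet_Icc, Real.volume_Icc,
          ← ENNReal.ofReal_mul (sq_nonneg c), ← ENNReal.ofReal_mul hL]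
        congr 1
        ring

lemma lintegral_omega_enorm_deriv_plateau_le (hε : 0 < ε) (c : ℝ) :
    ∫⁻ x in Omega L, ‖deriv (fun s => c * plateau L ε s) (x 0 - x 1)‖ₑ ≤
      ENNReal.ofReal L * (‖c‖ₑ * 2) :=
  calc ∫⁻ x in Omega L, ‖deriv (fun s => c * plateau L ε s) (x 0 - x 1)‖ₑ
      ≤ ENNReal.ofReal L * ∫⁻ s, ‖deriv (fun s => c * plateau L ε s) s‖ₑ :=
        lintegral_omega_comp_sub_le L _
    _ = ENNReal.ofReal L * (‖c‖ₑ * ∫⁻ s, ‖deriv (plateau L ε) s‖ₑ) := by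
        simp only [deriv_const_mul_field', enorm_mul]
        rw [lintegral_const_mul' _ _ enorm_ne_top]
    _ ≤ ENNReal.ofReal L * (‖c‖ₑ * 2) := by
        gcongr
        exact lintegral_enorm_deriv_plateau_le hε

end plateau

lemma J_le_of_plateau {L σ γ : ℝ} (hL0 : 0 < L) (hL1 : L < 1) (hσ : 0 < σ) (hγ : 0 < γ) :
    J L σ γ ![1, 1] ≤ ENNReal.ofReal (γ ^ 2 * (1 - L) / L + 6 * σ * γ) := by
  set ε := L * σ / γ with hε_def
  have hε : 0 < ε := by positivity
  have hP0 : ∀ s ∈ Icc (0 : ℝ) 1, γ * (1 - ramp (-ε) ε s) = 0 := fun s hs => by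
    rw [ramp_eq_one hε (by linarith [hs.1]), sub_self, mul_zero]
  have hPQ : ∀ s ∈ Icc (-L) (1 - L),
      γ * (1 - ramp (-ε) ε s) + L * (γ / L * plateau L ε s) = γ := fun s hs => by
    rw [plateau_eq_ramp hε hs.2]
    field_simp
    ring
  have helastic : 0 ≤ L * (γ / L) ^ 2 * (1 - L + 2 * ε) :=
    mul_nonneg (by positivity) (by linarith)
  calc J L σ γ ![1, 1]
      ≤ _ := J_le_of_profile (contDiff_const.mul (contDiff_const.sub contDiff_ramp))
        (contDiff_const.mul contDiff_plateau) hP0 hPQ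
    _ ≤ ENNReal.ofReal (L * (γ / L) ^ 2 * (1 - L + 2 * ε)) +
          ENNReal.ofReal σ * (2 * (ENNReal.ofReal L * (‖γ / L‖ₑ * 2))) := by
        gcongr
        exacts [lintegral_omega_sq_plateau_le hL0.le hε _,
          lintegral_omega_enorm_deriv_plateau_le hε _]
    _ = ENNReal.ofReal (γ ^ 2 * (1 - L) / L + 6 * σ * γ) := by
        rw [Real.enorm_eq_ofReal (by positivity), ← ENNReal.ofReal_ofNat 2,
          ← ENNReal.ofReal_mul (by positivity), ← ENNReal.ofReal_mul hL0.le,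
          ← ENNReal.ofReal_mul (by norm_num), ← ENNReal.ofReal_mul hσ.le,
          ← ENNReal.ofReal_add helastic (by positivity), hε_def]
        congr 1
        field_simp
        ring

/-- Under BC1, for every 0 < L < 1 there is a constant c_L > 0, depending
only on L, such that for all σ>0, γ>0:
J_L ≤ min { 3γ²/(2L), γ²(1-L)/L + c_L σ γ }. -/
theorem upper_bound_BC1 (L : ℝ) (hL0 : 0 < L) (hL1 : L < 1) :
    ∃ c : ℝ, 0 < c ∧ ∀ σ γ : ℝ, 0 < σ → 0 < γ →
      J L σ γ ![1, 1] ≤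
        ENNReal.ofReal (min (3 * γ ^ 2 / (2 * L)) (γ ^ 2 * (1 - L) / L + c * σ * γ)) := by
  refine ⟨6, by norm_num, fun σ γ hσ hγ => ?_⟩
  have hlinear : γ ^ 2 / L ≤ 3 * γ ^ 2 / (2 * L) := by
    rw [div_le_div_iff₀ hL0 (by positivity)]
    nlinarith [sq_nonneg γ]
  rw [ENNReal.ofReal_min]
  exact le_min ((J_le_of_linear hL0).trans (ENNReal.ofReal_le_ofReal hlinear))
    (J_le_of_plateau hL0 hL1 hσ hγ)

end
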